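/- (Two-weight Sawyer theorem for the dyadic maximal function, p = 2, finite lattice) Let 𝒟 be a finite dyadic lattice on ℝ^n, μ and ν locally finite Borel measures. Define Mf(x) = sup_{Q∈𝒟, x∈Q} ⨍_Q f dμ for f ≥ 0 (with the convention that the average is 0 when μ(Q) = 0). Then the estimate ‖Mf‖_{L^2(ν)} ≤ A‖f‖_{L^2(μ)} holds for all f ∈ L^2(μ), f ≥ 0, if and only if there exists B with ‖𝟙_Q M(𝟙_Q)‖_{L^2(ν)} ≤ B·μ(Q)^{1/2} for all Q ∈ 𝒟; moreover one may take A ≤ C·B for an absolute constant C (e.g. C = (27/2)^{1/2}·2). -/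

import Mathlib

open MeasureTheory ENNReal Set

/-- The dyadic cube of generation `k` at position `m` in `ℝⁿ`. -/
def dyadicCube (n : ℕ) (k : ℤ) (m : Fin n → ℤ) : Set (Fin n → ℝ) :=
  {x | ∀ i, (m i : ℝ) * (2 : ℝ) ^ (-k) ≤ x i ∧ x i < ((m i : ℝ) + 1) * (2 : ℝ) ^ (-k)}

/-- The average `⨍_Q f dμ`, interpreted as `0` when `μ Q = 0` or `μ Q = ∞`. -/
noncomputable def dyAvg {X : Type*} [MeasurableSpace X] (μ : Measure X)
    (f : X → ℝ≥0∞) (Q : Set X) : ℝ≥0∞ :=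
  if μ Q = 0 then 0 else (∫⁻ x in Q, f x ∂μ) / μ Q

/-- The dyadic maximal operator over a finite collection `D` of dyadic cubes:
`Mf(x) = sup_{i ∈ D, x ∈ Q_i} ⨍_{Q_i} f dμ`. -/
noncomputable def dyadicMaxOp {n : ℕ} (μ : Measure (Fin n → ℝ))
    (D : Finset (ℤ × (Fin n → ℤ))) (f : (Fin n → ℝ) → ℝ≥0∞) (x : Fin n → ℝ) : ℝ≥0∞ :=
  ⨆ i ∈ D, Set.indicator (dyadicCube n i.1 i.2)
    (fun _ => dyAvg μ f (dyadicCube n i.1 i.2)) x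

/-!
Since `M 𝟙_Q ≥ 1` on `Q`, the testing condition gives `ν Q ≤ B² μ Q` for every cube with
`μ Q ≠ 0`. Each superlevel set `{M f > t}` is the disjoint union of the maximal cubes `Q` with
`⨍_Q f dμ > t`; hence `ν {M f > t} ≤ B² μ {M f > t}` and `t μ {M f > t} ≤ ∫_{M f > t} f dμ`.
By the layer-cake formula the first bound gives `‖M f‖_{L²(ν)} ≤ B ‖M f‖_{L²(μ)}`, and the second,
with Cauchy–Schwarz, gives Doob's inequality `‖M f‖_{L²(μ)} ≤ 2 ‖f‖_{L²(μ)}`; so `A = 2B`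
suffices. Necessity is the estimate for `f = 𝟙_Q`.
-/

theorem rpow_half_le_of_le_mul_rpow_half {I K : ℝ≥0∞} (hI : I ≠ ∞)
    (h : I ≤ K * I ^ ((1 : ℝ) / 2)) : I ^ ((1 : ℝ) / 2) ≤ K := by
  set x := I ^ ((1 : ℝ) / 2)
  have hxx : x * x = I := by
    rw [← ENNReal.rpow_add_of_nonneg _ _ (by norm_num) (by norm_num)]
    norm_num
  rcases eq_or_ne x 0 with hx | hx
  · simp [hx]
  · rw [← ENNReal.mul_le_mul_iff_left hx (rpow_ne_top_of_nonneg (by norm_num) hI), hxx]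
    exact h

theorem lintegral_indicator_one_rpow {X : Type*} [MeasurableSpace X] {μ : Measure X} {s : Set X}
    (hs : MeasurableSet s) {p : ℝ} (hp : 0 < p) : ∫⁻ x, s.indicator 1 x ^ p ∂μ = μ s := by
  rw [← lintegral_indicator_one hs]
  refine lintegral_congr fun x => ?_
  by_cases hx : x ∈ s <;> simp [hx, hp]

section LayerCake

variable {X : Type*} [MeasurableSpace X]

theorem lintegral_rpow_eq_lintegral_meas_ofReal_lt_mul (μ : Measure X) {g : X → ℝ≥0∞}
    (hg : Measurable g) (hg_fin : ∀ x, g x ≠ ∞) {p : ℝ} (hp : 0 < p) :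
    ∫⁻ x, g x ^ p ∂μ = ENNReal.ofReal p *
      ∫⁻ t in Ioi 0, μ {x | ENNReal.ofReal t < g x} * ENNReal.ofReal (t ^ (p - 1)) := by
  have hg_eq : ∀ x, g x ^ p = ENNReal.ofReal ((g x).toReal ^ p) := fun x => by
    rw [← ENNReal.ofReal_rpow_of_nonneg toReal_nonneg hp.le, ofReal_toReal (hg_fin x)]
  simp_rw [hg_eq]
  rw [lintegral_rpow_eq_lintegral_meas_lt_mul μ (Filter.Eventually.of_forall fun x => toReal_nonneg)
    hg.ennreal_toReal.aemeasurable hp]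
  congr 1
  refine setLIntegral_congr_fun measurableSet_Ioi fun t (ht : 0 < t) => ?_
  simp_rw [ENNReal.ofReal_lt_iff_lt_toReal ht.le (hg_fin _)]

theorem lintegral_rpow_le_mul_of_meas_lt_le {ρ σ : Measure X} {g : X → ℝ≥0∞}
    (hg : Measurable g) (hg_fin : ∀ x, g x ≠ ∞) {C : ℝ≥0∞}
    (h : ∀ t, ρ {x | t < g x} ≤ C * σ {x | t < g x}) {p : ℝ} (hp : 0 < p) :
    ∫⁻ x, g x ^ p ∂ρ ≤ C * ∫⁻ x, g x ^ p ∂σ := by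
  have hmeas : Measurable fun t : ℝ =>
      σ {x | ENNReal.ofReal t < g x} * ENNReal.ofReal (t ^ (p - 1)) := by
    refine Measurable.mul (Antitone.measurable fun s t hst => measure_mono fun x hx => ?_)
      (by fun_prop)
    exact (ENNReal.ofReal_le_ofReal hst).trans_lt hx
  rw [lintegral_rpow_eq_lintegral_meas_ofReal_lt_mul ρ hg hg_fin hp,
    lintegral_rpow_eq_lintegral_meas_ofReal_lt_mul σ hg hg_fin hp, mul_left_comm,
    ← lintegral_const_mul C hmeas]
  gcongr _ * ?_
  refine lintegral_mono fun t => ?_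
  rw [← mul_assoc]
  gcongr ?_ * _
  exact h _

theorem lintegral_rpow_two_le_two_mul_of_weakType {μ : Measure X} {f g : X → ℝ≥0∞}
    (hf : Measurable f) (hg : Measurable g) (hg_fin : ∀ x, g x ≠ ∞)
    (hweak : ∀ t, t * μ {x | t < g x} ≤ ∫⁻ x in {x | t < g x}, f x ∂μ) :
    ∫⁻ x, g x ^ (2 : ℝ) ∂μ ≤ 2 * ∫⁻ x, f x * g x ∂μ := by
  -- `∫_{g > t} f dμ` is the `μ.withDensity f`-measure of `{g > t}`, and the layer-cake formula
  -- for `g` against `μ.withDensity f` sums these up to `∫ f g dμ`.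
  calc ∫⁻ x, g x ^ (2 : ℝ) ∂μ
      = ENNReal.ofReal 2 * ∫⁻ t in Ioi 0, ENNReal.ofReal t * μ {x | ENNReal.ofReal t < g x} := by
        rw [lintegral_rpow_eq_lintegral_meas_ofReal_lt_mul μ hg hg_fin two_pos]
        norm_num [mul_comm]
    _ ≤ ENNReal.ofReal 2 * ∫⁻ t in Ioi 0, μ.withDensity f {x | ENNReal.ofReal t < g x} := by
        gcongr with t
        rw [withDensity_apply _ (measurableSet_lt measurable_const hg)]
        exact hweak _
    _ = ENNReal.ofReal 2 * ∫⁻ x, g x ^ (1 : ℝ) ∂μ.withDensity f := by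
        rw [lintegral_rpow_eq_lintegral_meas_ofReal_lt_mul _ hg hg_fin one_pos]
        norm_num
    _ = 2 * ∫⁻ x, f x * g x ∂μ := by
        simp only [rpow_one, lintegral_withDensity_eq_lintegral_mul μ hf hg, Pi.mul_apply]
        norm_num

theorem lintegral_rpow_two_rpow_half_le_of_weakType {μ : Measure X} {f g : X → ℝ≥0∞}
    (hf : Measurable f) (hg : Measurable g) (hg_fin : ∀ x, g x ≠ ∞)
    (hg_sq : ∫⁻ x, g x ^ (2 : ℝ) ∂μ ≠ ∞)
    (hweak : ∀ t, t * μ {x | t < g x} ≤ ∫⁻ x in {x | t < g x}, f x ∂μ) :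
    (∫⁻ x, g x ^ (2 : ℝ) ∂μ) ^ ((1 : ℝ) / 2) ≤ 2 * (∫⁻ x, f x ^ (2 : ℝ) ∂μ) ^ ((1 : ℝ) / 2) := by
  refine rpow_half_le_of_le_mul_rpow_half hg_sq ?_
  calc ∫⁻ x, g x ^ (2 : ℝ) ∂μ ≤ 2 * ∫⁻ x, (f * g) x ∂μ :=
        lintegral_rpow_two_le_two_mul_of_weakType hf hg hg_fin hweak
    _ ≤ 2 * ((∫⁻ x, f x ^ (2 : ℝ) ∂μ) ^ ((1 : ℝ) / 2) *
          (∫⁻ x, g x ^ (2 : ℝ) ∂μ) ^ ((1 : ℝ) / 2)) := by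
        gcongr
        exact lintegral_mul_le_Lp_mul_Lq μ Real.HolderConjugate.two_two hf.aemeasurable
          hg.aemeasurable
    _ = _ := by rw [mul_assoc]

end LayerCake

theorem exists_subset_pairwiseDisjoint_biUnion_eq {X : Type*} (S : Finset (Set X))
    (hS : ∀ s ∈ S, ∀ t ∈ S, s ⊆ t ∨ t ⊆ s ∨ Disjoint s t) :
    ∃ T ⊆ S, (T : Set (Set X)).PairwiseDisjoint id ∧ ⋃ s ∈ T, s = ⋃ s ∈ S, s := by
  classical
  refine ⟨S.filter (Maximal (· ∈ S)), Finset.filter_subset _ _, ?_, ?_⟩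
  · intro s hs t ht hst
    simp only [Finset.coe_filter, mem_ofPred_eq] at hs ht
    rcases hS s hs.1 t ht.1 with h | h | h
    · exact absurd (hs.2.eq_of_le ht.1 h) hst
    · exact absurd (ht.2.eq_of_le hs.1 h).symm hst
    · exact h
  · refine subset_antisymm (biUnion_subset_biUnion_left fun s hs => (Finset.mem_filter.1 hs).1) ?_
    refine iUnion₂_subset fun s hs => ?_
    obtain ⟨t, hst, ht⟩ := S.exists_le_maximal hs
    exact hst.trans (subset_biUnion_of_mem (u := id) (Finset.mem_filter.2 ⟨ht.1, ht⟩))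

section DyadicCube

variable {n : ℕ}

theorem mem_dyadicCube_iff {k : ℤ} {m : Fin n → ℤ} {x : Fin n → ℝ} :
    x ∈ dyadicCube n k m ↔ ∀ i, ⌊x i * 2 ^ k⌋ = m i := by
  have h2 : (0 : ℝ) < 2 ^ k := zpow_pos two_pos k
  refine forall_congr' fun i => ?_
  rw [Int.floor_eq_iff, zpow_neg, ← div_eq_mul_inv, ← div_eq_mul_inv, div_le_iff₀ h2,
    lt_div_iff₀ h2]

theorem exists_floor_mul_zpow_eq_floor_div {k₁ k₂ : ℤ} (hk : k₁ ≤ k₂) :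
    ∃ N : ℕ, ∀ y : ℝ, ⌊y * 2 ^ k₁⌋ = ⌊y * 2 ^ k₂⌋ / N := by
  refine ⟨2 ^ (k₂ - k₁).toNat, fun y => ?_⟩
  rw [← Int.floor_div_natCast]
  congr 1
  push_cast
  rw [← zpow_natCast, Int.toNat_of_nonneg (sub_nonneg.2 hk), mul_div_assoc,
    ← zpow_sub₀ two_ne_zero]
  ring_nf

theorem dyadicCube_subset_of_le_of_not_disjoint {k₁ k₂ : ℤ} {m₁ m₂ : Fin n → ℤ} (hk : k₁ ≤ k₂)
    (h : ¬Disjoint (dyadicCube n k₁ m₁) (dyadicCube n k₂ m₂)) :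
    dyadicCube n k₂ m₂ ⊆ dyadicCube n k₁ m₁ := by
  obtain ⟨x, hx₁, hx₂⟩ := not_disjoint_iff.1 h
  obtain ⟨N, hN⟩ := exists_floor_mul_zpow_eq_floor_div hk
  intro y hy
  rw [mem_dyadicCube_iff] at hx₁ hx₂ hy ⊢
  intro i
  rw [← hx₁ i, hN, hN, hy i, hx₂ i]

theorem dyadicCube_subset_or_subset_or_disjoint (k₁ k₂ : ℤ) (m₁ m₂ : Fin n → ℤ) :
    dyadicCube n k₁ m₁ ⊆ dyadicCube n k₂ m₂ ∨ dyadicCube n k₂ m₂ ⊆ dyadicCube n k₁ m₁ ∨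
      Disjoint (dyadicCube n k₁ m₁) (dyadicCube n k₂ m₂) := by
  by_cases h : Disjoint (dyadicCube n k₁ m₁) (dyadicCube n k₂ m₂)
  · exact Or.inr (Or.inr h)
  rcases le_total k₁ k₂ with hk | hk
  · exact Or.inr (Or.inl (dyadicCube_subset_of_le_of_not_disjoint hk h))
  · exact Or.inl (dyadicCube_subset_of_le_of_not_disjoint hk (by rwa [disjoint_comm]))

theorem dyadicCube_eq_pi (k : ℤ) (m : Fin n → ℤ) :
    dyadicCube n k m = univ.pi fun i => Ico ((m i : ℝ) * 2 ^ (-k)) ((m i + 1) * 2 ^ (-k)) := by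
  ext x
  simp [dyadicCube]

theorem measurableSet_dyadicCube (k : ℤ) (m : Fin n → ℤ) : MeasurableSet (dyadicCube n k m) := by
  rw [dyadicCube_eq_pi]
  exact MeasurableSet.univ_pi fun i => measurableSet_Ico

theorem measure_dyadicCube_ne_top (μ : Measure (Fin n → ℝ)) [IsLocallyFiniteMeasure μ]
    (k : ℤ) (m : Fin n → ℤ) : μ (dyadicCube n k m) ≠ ∞ := by
  have hcompact : IsCompact (Icc (fun i => (m i : ℝ) * 2 ^ (-k)) fun i => (m i + 1) * 2 ^ (-k)) :=
    isCompact_Icc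
  exact ne_top_of_le_ne_top hcompact.measure_lt_top.ne
    (measure_mono fun x hx => ⟨fun i => (hx i).1, fun i => (hx i).2.le⟩)

end DyadicCube

section DyAvg

variable {X : Type*} [MeasurableSpace X] {μ : Measure X} {f : X → ℝ≥0∞} {Q : Set X}

theorem measure_ne_zero_of_lt_dyAvg {t : ℝ≥0∞} (h : t < dyAvg μ f Q) : μ Q ≠ 0 := by
  intro h0
  simp [dyAvg, h0] at h

theorem mul_measure_le_setLIntegral_of_lt_dyAvg (hQ : μ Q ≠ ∞) {t : ℝ≥0∞}
    (h : t < dyAvg μ f Q) : t * μ Q ≤ ∫⁻ x in Q, f x ∂μ := by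
  have h0 := measure_ne_zero_of_lt_dyAvg h
  rw [dyAvg, if_neg h0] at h
  exact (ENNReal.le_div_iff_mul_le (Or.inl h0) (Or.inl hQ)).1 h.le

theorem dyAvg_indicator_one (hQm : MeasurableSet Q) (h0 : μ Q ≠ 0) (hQ : μ Q ≠ ∞) :
    dyAvg μ (Q.indicator 1) Q = 1 := by
  rw [dyAvg, if_neg h0, setLIntegral_indicator hQm, inter_self]
  simp [ENNReal.div_self h0 hQ]

theorem dyAvg_ne_top (hQ : μ Q ≠ ∞) (hf2 : ∫⁻ x, f x ^ (2 : ℝ) ∂μ ≠ ∞) : dyAvg μ f Q ≠ ∞ := by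
  have hf_le : ∀ x, f x ≤ 1 + f x ^ (2 : ℝ) := fun x => by
    rcases le_total (f x) 1 with h | h
    · exact h.trans le_self_add
    · calc f x = f x ^ (1 : ℝ) := (ENNReal.rpow_one _).symm
        _ ≤ f x ^ (2 : ℝ) := ENNReal.rpow_le_rpow_of_exponent_le h (by norm_num)
        _ ≤ 1 + f x ^ (2 : ℝ) := le_add_self
  unfold dyAvg
  split_ifs with h0
  · exact zero_ne_top
  refine (ENNReal.div_lt_top ?_ h0).ne
  refine ne_top_of_le_ne_top ?_ (lintegral_mono fun x => hf_le x)
  rw [lintegral_add_left measurable_const, lintegral_const, Measure.restrict_apply_univ, one_mul]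
  exact ENNReal.add_ne_top.2 ⟨hQ, ne_top_of_le_ne_top hf2 (setLIntegral_le_lintegral _ _)⟩

end DyAvg

section DyadicMaxOp

variable {n : ℕ} (μ : Measure (Fin n → ℝ)) (D : Finset (ℤ × (Fin n → ℤ)))
  (f : (Fin n → ℝ) → ℝ≥0∞)

theorem measurable_dyadicMaxOp : Measurable (dyadicMaxOp μ D f) :=
  Measurable.iSup fun _ => Measurable.iSup fun _ =>
    measurable_const.indicator (measurableSet_dyadicCube _ _)

theorem dyAvg_le_dyadicMaxOp {i : ℤ × (Fin n → ℤ)} (hi : i ∈ D) {x : Fin n → ℝ}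
    (hx : x ∈ dyadicCube n i.1 i.2) : dyAvg μ f (dyadicCube n i.1 i.2) ≤ dyadicMaxOp μ D f x := by
  refine le_trans (le_of_eq ?_) (le_iSup₂ (f := fun i (_ : i ∈ D) =>
    (dyadicCube n i.1 i.2).indicator (fun _ => dyAvg μ f (dyadicCube n i.1 i.2)) x) i hi)
  rw [indicator_of_mem hx]

theorem lt_dyadicMaxOp_iff {t : ℝ≥0∞} {x : Fin n → ℝ} :
    t < dyadicMaxOp μ D f x ↔
      ∃ i ∈ D, x ∈ dyadicCube n i.1 i.2 ∧ t < dyAvg μ f (dyadicCube n i.1 i.2) := by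
  simp only [dyadicMaxOp, lt_iSup_iff, exists_prop]
  refine exists_congr fun i => and_congr_right fun _ => ?_
  by_cases hx : x ∈ dyadicCube n i.1 i.2 <;> simp [hx]

theorem dyadicMaxOp_le_indicator_biUnion (x : Fin n → ℝ) :
    dyadicMaxOp μ D f x ≤ (⋃ i ∈ D, dyadicCube n i.1 i.2).indicator
      (fun _ => ∑ i ∈ D, dyAvg μ f (dyadicCube n i.1 i.2)) x := by
  refine iSup₂_le fun i hi => ?_
  by_cases hx : x ∈ dyadicCube n i.1 i.2
  · rw [indicator_of_mem hx, indicator_of_mem (mem_iUnion₂.2 ⟨i, hi, hx⟩)]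
    exact Finset.single_le_sum (f := fun i => dyAvg μ f (dyadicCube n i.1 i.2))
      (fun _ _ => zero_le) hi
  · simp [hx]

variable [IsLocallyFiniteMeasure μ] {f}

theorem dyadicMaxOp_ne_top (hf2 : ∫⁻ x, f x ^ (2 : ℝ) ∂μ ≠ ∞) (x : Fin n → ℝ) :
    dyadicMaxOp μ D f x ≠ ∞ := by
  refine ne_top_of_le_ne_top ?_ ((dyadicMaxOp_le_indicator_biUnion μ D f x).trans
    (indicator_le_self _ _ x))
  exact ENNReal.sum_ne_top.2 fun i _ => dyAvg_ne_top (measure_dyadicCube_ne_top μ _ _) hf2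

theorem lintegral_dyadicMaxOp_rpow_two_ne_top (hf2 : ∫⁻ x, f x ^ (2 : ℝ) ∂μ ≠ ∞) :
    ∫⁻ x, dyadicMaxOp μ D f x ^ (2 : ℝ) ∂μ ≠ ∞ := by
  set U := ⋃ i ∈ D, dyadicCube n i.1 i.2
  set S := ∑ i ∈ D, dyAvg μ f (dyadicCube n i.1 i.2)
  have hU : MeasurableSet U :=
    Finset.measurableSet_biUnion D fun i _ => measurableSet_dyadicCube i.1 i.2
  have hS : S ≠ ∞ :=
    ENNReal.sum_ne_top.2 fun i _ => dyAvg_ne_top (measure_dyadicCube_ne_top μ _ _) hf2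
  have hμU : μ U ≠ ∞ := ne_top_of_le_ne_top
    (ENNReal.sum_ne_top.2 fun i _ => measure_dyadicCube_ne_top μ i.1 i.2)
    (measure_biUnion_finset_le D _)
  have hsq : ∀ x, U.indicator (fun _ => S) x ^ (2 : ℝ) = U.indicator (fun _ => S ^ (2 : ℝ)) x :=
    fun x => by
      by_cases hx : x ∈ U
      · rw [indicator_of_mem hx, indicator_of_mem hx]
      · rw [indicator_of_notMem hx, indicator_of_notMem hx, ENNReal.zero_rpow_of_pos two_pos]
  refine ne_top_of_le_ne_top ?_ (lintegral_mono fun x =>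
    (ENNReal.rpow_le_rpow (dyadicMaxOp_le_indicator_biUnion μ D f x) zero_le_two).trans_eq (hsq x))
  rw [lintegral_indicator hU, setLIntegral_const]
  exact ENNReal.mul_ne_top (ENNReal.rpow_ne_top_of_nonneg zero_le_two hS) hμU

end DyadicMaxOp

section Superlevel

variable {n : ℕ} (μ : Measure (Fin n → ℝ)) (D : Finset (ℤ × (Fin n → ℤ)))
  (f : (Fin n → ℝ) → ℝ≥0∞)

theorem exists_pairwiseDisjoint_cubes_superlevel_dyadicMaxOp (t : ℝ≥0∞) :
    ∃ T : Finset (Set (Fin n → ℝ)), (T : Set (Set (Fin n → ℝ))).PairwiseDisjoint id ∧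
      {x | t < dyadicMaxOp μ D f x} = ⋃ Q ∈ T, Q ∧
      ∀ Q ∈ T, ∃ i ∈ D, dyadicCube n i.1 i.2 = Q ∧ t < dyAvg μ f Q := by
  classical
  set S := (D.filter fun i => t < dyAvg μ f (dyadicCube n i.1 i.2)).image
    fun i => dyadicCube n i.1 i.2
  have hS : ∀ Q ∈ S, ∃ i ∈ D, dyadicCube n i.1 i.2 = Q ∧ t < dyAvg μ f Q := by
    simp only [S, Finset.mem_image, Finset.mem_filter]
    rintro Q ⟨i, ⟨hi, ht⟩, rfl⟩
    exact ⟨i, hi, rfl, ht⟩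
  have hlaminar : ∀ Q ∈ S, ∀ R ∈ S, Q ⊆ R ∨ R ⊆ Q ∨ Disjoint Q R := by
    intro Q hQ R hR
    obtain ⟨i, -, rfl, -⟩ := hS Q hQ
    obtain ⟨j, -, rfl, -⟩ := hS R hR
    exact dyadicCube_subset_or_subset_or_disjoint _ _ _ _
  obtain ⟨T, hTS, hdisj, hunion⟩ := exists_subset_pairwiseDisjoint_biUnion_eq S hlaminar
  refine ⟨T, hdisj, ?_, fun Q hQ => hS Q (hTS hQ)⟩
  ext x
  simp only [hunion, S, mem_ofPred_eq, lt_dyadicMaxOp_iff, mem_iUnion, Finset.mem_image,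
    Finset.mem_filter, exists_prop]
  constructor
  · rintro ⟨i, hi, hx, ht⟩
    exact ⟨_, ⟨i, ⟨hi, ht⟩, rfl⟩, hx⟩
  · rintro ⟨_, ⟨i, ⟨hi, ht⟩, rfl⟩, hx⟩
    exact ⟨i, hi, hx, ht⟩

theorem measure_superlevel_dyadicMaxOp_le (ν : Measure (Fin n → ℝ)) {C : ℝ≥0∞}
    (hC : ∀ i ∈ D, μ (dyadicCube n i.1 i.2) ≠ 0 →
      ν (dyadicCube n i.1 i.2) ≤ C * μ (dyadicCube n i.1 i.2)) (t : ℝ≥0∞) :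
    ν {x | t < dyadicMaxOp μ D f x} ≤ C * μ {x | t < dyadicMaxOp μ D f x} := by
  obtain ⟨T, hdisj, hunion, hT⟩ := exists_pairwiseDisjoint_cubes_superlevel_dyadicMaxOp μ D f t
  have hmeas : ∀ Q ∈ T, MeasurableSet Q := fun Q hQ => by
    obtain ⟨i, -, rfl, -⟩ := hT Q hQ
    exact measurableSet_dyadicCube _ _
  rw [hunion, measure_biUnion_finset (μ := μ) (f := fun Q => Q) hdisj hmeas, Finset.mul_sum]
  refine (measure_biUnion_finset_le T fun Q => Q).trans (Finset.sum_le_sum fun Q hQ => ?_)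
  obtain ⟨i, hi, rfl, ht⟩ := hT Q hQ
  exact hC i hi (measure_ne_zero_of_lt_dyAvg ht)

variable [IsLocallyFiniteMeasure μ]

theorem mul_measure_superlevel_dyadicMaxOp_le (t : ℝ≥0∞) :
    t * μ {x | t < dyadicMaxOp μ D f x} ≤ ∫⁻ x in {x | t < dyadicMaxOp μ D f x}, f x ∂μ := by
  obtain ⟨T, hdisj, hunion, hT⟩ := exists_pairwiseDisjoint_cubes_superlevel_dyadicMaxOp μ D f t
  have hmeas : ∀ Q ∈ T, MeasurableSet Q := fun Q hQ => by
    obtain ⟨i, -, rfl, -⟩ := hT Q hQ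
    exact measurableSet_dyadicCube _ _
  rw [hunion, measure_biUnion_finset (f := fun Q => Q) hdisj hmeas,
    lintegral_biUnion_finset (t := fun Q => Q) hdisj hmeas, Finset.mul_sum]
  refine Finset.sum_le_sum fun Q hQ => ?_
  obtain ⟨i, -, rfl, ht⟩ := hT Q hQ
  exact mul_measure_le_setLIntegral_of_lt_dyAvg (measure_dyadicCube_ne_top μ _ _) ht

end Superlevel

section Sawyer

variable {n : ℕ} {μ : Measure (Fin n → ℝ)} [IsLocallyFiniteMeasure μ]
  (D : Finset (ℤ × (Fin n → ℤ)))

theorem lintegral_dyadicMaxOp_rpow_two_rpow_half_le {f : (Fin n → ℝ) → ℝ≥0∞} (hf : Measurable f)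
    (hf2 : ∫⁻ x, f x ^ (2 : ℝ) ∂μ ≠ ∞) :
    (∫⁻ x, dyadicMaxOp μ D f x ^ (2 : ℝ) ∂μ) ^ ((1 : ℝ) / 2) ≤
      2 * (∫⁻ x, f x ^ (2 : ℝ) ∂μ) ^ ((1 : ℝ) / 2) :=
  lintegral_rpow_two_rpow_half_le_of_weakType hf (measurable_dyadicMaxOp μ D f)
    (dyadicMaxOp_ne_top μ D hf2) (lintegral_dyadicMaxOp_rpow_two_ne_top μ D hf2)
    (mul_measure_superlevel_dyadicMaxOp_le μ D f)

theorem measure_dyadicCube_le_of_testing (ν : Measure (Fin n → ℝ)) {B : ℝ≥0∞}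
    {i : ℤ × (Fin n → ℤ)} (hi : i ∈ D) (h0 : μ (dyadicCube n i.1 i.2) ≠ 0)
    (htest : (∫⁻ x, ((dyadicCube n i.1 i.2).indicator
        (fun y => dyadicMaxOp μ D ((dyadicCube n i.1 i.2).indicator 1) y) x) ^ (2 : ℝ) ∂ν) ^
          ((1 : ℝ) / 2) ≤ B * μ (dyadicCube n i.1 i.2) ^ ((1 : ℝ) / 2)) :
    ν (dyadicCube n i.1 i.2) ≤ B ^ 2 * μ (dyadicCube n i.1 i.2) := by
  set Q := dyadicCube n i.1 i.2
  have hQ : MeasurableSet Q := measurableSet_dyadicCube _ _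
  have hone_le : ∀ x ∈ Q, 1 ≤ dyadicMaxOp μ D (Q.indicator 1) x := fun x hx =>
    (dyAvg_indicator_one hQ h0 (measure_dyadicCube_ne_top μ _ _)).symm.le.trans
      (dyAvg_le_dyadicMaxOp μ D _ hi hx)
  rw [one_div, ENNReal.rpow_inv_le_iff two_pos] at htest
  calc ν Q = ∫⁻ x, Q.indicator 1 x ∂ν := (lintegral_indicator_one hQ).symm
    _ ≤ ∫⁻ x, (Q.indicator (fun y => dyadicMaxOp μ D (Q.indicator 1) y) x) ^ (2 : ℝ) ∂ν := by
        refine lintegral_mono fun x => ?_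
        by_cases hx : x ∈ Q
        · simp only [indicator_of_mem hx, Pi.one_apply]
          exact ENNReal.one_le_rpow (hone_le x hx) two_pos
        · simp [hx]
    _ ≤ (B * μ Q ^ (2 : ℝ)⁻¹) ^ (2 : ℝ) := htest
    _ = B ^ 2 * μ Q := by
        rw [ENNReal.mul_rpow_of_nonneg _ _ zero_le_two, ← ENNReal.rpow_mul]
        norm_num

theorem testing_le_of_lintegral_dyadicMaxOp_le (ν : Measure (Fin n → ℝ)) {A : ℝ≥0∞}
    (hA : ∀ f : (Fin n → ℝ) → ℝ≥0∞, Measurable f → ∫⁻ x, f x ^ (2 : ℝ) ∂μ ≠ ∞ →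
      (∫⁻ x, dyadicMaxOp μ D f x ^ (2 : ℝ) ∂ν) ^ ((1 : ℝ) / 2) ≤
        A * (∫⁻ x, f x ^ (2 : ℝ) ∂μ) ^ ((1 : ℝ) / 2))
    (i : ℤ × (Fin n → ℤ)) :
    (∫⁻ x, ((dyadicCube n i.1 i.2).indicator
        (fun y => dyadicMaxOp μ D ((dyadicCube n i.1 i.2).indicator 1) y) x) ^ (2 : ℝ) ∂ν) ^
      ((1 : ℝ) / 2) ≤ A * μ (dyadicCube n i.1 i.2) ^ ((1 : ℝ) / 2) := by
  have hQ := measurableSet_dyadicCube (n := n) i.1 i.2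
  have hnorm := lintegral_indicator_one_rpow (μ := μ) hQ two_pos
  calc _ ≤ (∫⁻ x, dyadicMaxOp μ D ((dyadicCube n i.1 i.2).indicator 1) x ^ (2 : ℝ) ∂ν) ^
        ((1 : ℝ) / 2) := by
        gcongr with x
        exact indicator_le_self _ _ x
    _ ≤ A * μ (dyadicCube n i.1 i.2) ^ ((1 : ℝ) / 2) := by
        simpa only [hnorm] using hA _ (measurable_one.indicator hQ)
          (hnorm ▸ measure_dyadicCube_ne_top μ _ _)

theorem lintegral_dyadicMaxOp_rpow_two_rpow_half_le_of_testing (ν : Measure (Fin n → ℝ))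
    {B : ℝ≥0∞} (hB : ∀ i ∈ D,
      (∫⁻ x, ((dyadicCube n i.1 i.2).indicator
          (fun y => dyadicMaxOp μ D ((dyadicCube n i.1 i.2).indicator 1) y) x) ^ (2 : ℝ) ∂ν) ^
        ((1 : ℝ) / 2) ≤ B * μ (dyadicCube n i.1 i.2) ^ ((1 : ℝ) / 2))
    {f : (Fin n → ℝ) → ℝ≥0∞} (hf : Measurable f) (hf2 : ∫⁻ x, f x ^ (2 : ℝ) ∂μ ≠ ∞) :
    (∫⁻ x, dyadicMaxOp μ D f x ^ (2 : ℝ) ∂ν) ^ ((1 : ℝ) / 2) ≤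
      2 * B * (∫⁻ x, f x ^ (2 : ℝ) ∂μ) ^ ((1 : ℝ) / 2) := by
  have hlevel := measure_superlevel_dyadicMaxOp_le μ D f ν
    fun i hi h0 => measure_dyadicCube_le_of_testing D ν hi h0 (hB i hi)
  calc _ ≤ (B ^ 2 * ∫⁻ x, dyadicMaxOp μ D f x ^ (2 : ℝ) ∂μ) ^ ((1 : ℝ) / 2) := by
        gcongr
        exact lintegral_rpow_le_mul_of_meas_lt_le (measurable_dyadicMaxOp μ D f)
          (dyadicMaxOp_ne_top μ D hf2) hlevel two_pos
    _ = B * (∫⁻ x, dyadicMaxOp μ D f x ^ (2 : ℝ) ∂μ) ^ ((1 : ℝ) / 2) := by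
        rw [ENNReal.mul_rpow_of_nonneg _ _ (by norm_num), ← ENNReal.rpow_natCast,
          ← ENNReal.rpow_mul]
        norm_num
    _ ≤ B * (2 * (∫⁻ x, f x ^ (2 : ℝ) ∂μ) ^ ((1 : ℝ) / 2)) := by
        gcongr
        exact lintegral_dyadicMaxOp_rpow_two_rpow_half_le D hf hf2
    _ = 2 * B * (∫⁻ x, f x ^ (2 : ℝ) ∂μ) ^ ((1 : ℝ) / 2) := by ring

end Sawyer

theorem sawyer_two_weight_p_two_general {n : ℕ} (μ ν : Measure (Fin n → ℝ))
    [IsLocallyFiniteMeasure μ]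
    (D : Finset (ℤ × (Fin n → ℤ))) :
    (∀ A : ℝ≥0∞,
      (∀ f : (Fin n → ℝ) → ℝ≥0∞, Measurable f → (∫⁻ x, f x ^ (2 : ℝ) ∂μ) ≠ ∞ →
        (∫⁻ x, (dyadicMaxOp μ D f x) ^ (2 : ℝ) ∂ν) ^ ((1 : ℝ) / 2) ≤
          A * (∫⁻ x, f x ^ (2 : ℝ) ∂μ) ^ ((1 : ℝ) / 2)) →
      ∀ i ∈ D,
        (∫⁻ x, ((dyadicCube n i.1 i.2).indicator
            (fun y => dyadicMaxOp μ D ((dyadicCube n i.1 i.2).indicator 1) y) x) ^ (2 : ℝ)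
          ∂ν) ^ ((1 : ℝ) / 2) ≤ A * μ (dyadicCube n i.1 i.2) ^ ((1 : ℝ) / 2)) ∧
    (∀ B : ℝ≥0∞,
      (∀ i ∈ D,
        (∫⁻ x, ((dyadicCube n i.1 i.2).indicator
            (fun y => dyadicMaxOp μ D ((dyadicCube n i.1 i.2).indicator 1) y) x) ^ (2 : ℝ)
          ∂ν) ^ ((1 : ℝ) / 2) ≤ B * μ (dyadicCube n i.1 i.2) ^ ((1 : ℝ) / 2)) →
      ∀ f : (Fin n → ℝ) → ℝ≥0∞, Measurable f → (∫⁻ x, f x ^ (2 : ℝ) ∂μ) ≠ ∞ →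
        (∫⁻ x, (dyadicMaxOp μ D f x) ^ (2 : ℝ) ∂ν) ^ ((1 : ℝ) / 2) ≤
          ENNReal.ofReal ((27 / 2 : ℝ) ^ ((1 : ℝ) / 2) * 2) * B *
            (∫⁻ x, f x ^ (2 : ℝ) ∂μ) ^ ((1 : ℝ) / 2)) := by
  refine ⟨fun A hA i _ => testing_le_of_lintegral_dyadicMaxOp_le D ν hA i,
    fun B hB f hf hf2 => ?_⟩
  refine (lintegral_dyadicMaxOp_rpow_two_rpow_half_le_of_testing D ν hB hf hf2).trans ?_
  have hconst : (2 : ℝ≥0∞) ≤ ENNReal.ofReal ((27 / 2 : ℝ) ^ ((1 : ℝ) / 2) * 2) := by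
    rw [← ENNReal.ofReal_ofNat 2]
    exact ENNReal.ofReal_le_ofReal
      (le_mul_of_one_le_left zero_le_two (Real.one_le_rpow (by norm_num) (by norm_num)))
  gcongr

/-- Two-weight Sawyer theorem for the dyadic maximal function, `p = 2`, finite lattice:
the estimate `‖Mf‖_{L²(ν)} ≤ A ‖f‖_{L²(μ)}` holds iff the Sawyer testing condition
`‖𝟙_Q M(𝟙_Q)‖_{L²(ν)} ≤ B μ(Q)^{1/2}` holds, and in the sufficiency direction one can take
`A = (27/2)^{1/2} · 2 · B`. -/
theorem sawyer_two_weight_p_two {n : ℕ} (μ ν : Measure (Fin n → ℝ))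
    [IsLocallyFiniteMeasure μ] [IsLocallyFiniteMeasure ν]
    (D : Finset (ℤ × (Fin n → ℤ))) :
    (∀ A : ℝ≥0∞,
      (∀ f : (Fin n → ℝ) → ℝ≥0∞, Measurable f → (∫⁻ x, f x ^ (2 : ℝ) ∂μ) ≠ ∞ →
        (∫⁻ x, (dyadicMaxOp μ D f x) ^ (2 : ℝ) ∂ν) ^ ((1 : ℝ) / 2) ≤
          A * (∫⁻ x, f x ^ (2 : ℝ) ∂μ) ^ ((1 : ℝ) / 2)) →
      ∀ i ∈ D,
        (∫⁻ x, ((dyadicCube n i.1 i.2).indicator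
            (fun y => dyadicMaxOp μ D ((dyadicCube n i.1 i.2).indicator 1) y) x) ^ (2 : ℝ)
          ∂ν) ^ ((1 : ℝ) / 2) ≤ A * μ (dyadicCube n i.1 i.2) ^ ((1 : ℝ) / 2)) ∧
    (∀ B : ℝ≥0∞,
      (∀ i ∈ D,
        (∫⁻ x, ((dyadicCube n i.1 i.2).indicator
            (fun y => dyadicMaxOp μ D ((dyadicCube n i.1 i.2).indicator 1) y) x) ^ (2 : ℝ)
          ∂ν) ^ ((1 : ℝ) / 2) ≤ B * μ (dyadicCube n i.1 i.2) ^ ((1 : ℝ) / 2)) →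
      ∀ f : (Fin n → ℝ) → ℝ≥0∞, Measurable f → (∫⁻ x, f x ^ (2 : ℝ) ∂μ) ≠ ∞ →
        (∫⁻ x, (dyadicMaxOp μ D f x) ^ (2 : ℝ) ∂ν) ^ ((1 : ℝ) / 2) ≤
          ENNReal.ofReal ((27 / 2 : ℝ) ^ ((1 : ℝ) / 2) * 2) * B *
            (∫⁻ x, f x ^ (2 : ℝ) ∂μ) ^ ((1 : ℝ) / 2)) :=
  sawyer_two_weight_p_two_general μ ν D
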